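/- arXiv:1408.4844 — 5 statements merged into one kernel-verified Lean document; each statement's English description precedes it below -/
import Mathlib

section
/- The permutohedron P_n = { x ∈ ℝ^n : Σ_{i=1}^n x_i = n(n-1)/2, and Σ_{i∈I} x_i ≥ |I|(|I|-1)/2 for all I ⊆ {1,…,n} } is the convex hull of the set of points V_n = { (σ(0), σ(1), …, σ(n-1)) : σ a permutation of {0,…,n-1} }. -/
open Finset

lemma aux_sum_range_card_le_sum (t : Finset ℕ) : ∑ i ∈ range t.card, i ≤ ∑ x ∈ t, x := by
  induction t using Finset.strongInduction with
  | _ t ih =>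
    rcases t.eq_empty_or_nonempty with rfl | ht
    · simp
    · set M := t.max' ht with hMdef
      have hM : M ∈ t := t.max'_mem ht
      have hsub : t ⊆ range (M + 1) := fun x hx => mem_range.2 (Nat.lt_succ_of_le (t.le_max' x hx))
      have hcard : t.card ≤ M + 1 := by simpa using Finset.card_le_card hsub
      have hce : (t.erase M).card = t.card - 1 := Finset.card_erase_of_mem hM
      have ih' := ih (t.erase M) (Finset.erase_ssubset hM)
      rw [hce] at ih'
      have hsum : ∑ x ∈ t.erase M, x + M = ∑ x ∈ t, x := Finset.sum_erase_add _ _ hM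
      have hpos : 1 ≤ t.card := Finset.card_pos.2 ht
      have hr : ∑ i ∈ range t.card, i = ∑ i ∈ range (t.card - 1), i + (t.card - 1) := by
        conv_lhs => rw [show t.card = (t.card - 1) + 1 by omega]
        rw [Finset.sum_range_succ]
      omega

lemma aux_abel (d e : ℕ → ℝ) (hd : ∀ j, d j ≤ d (j+1)) :
    ∀ m, (∀ k, k < m → 0 ≤ ∑ i ∈ range (k+1), e i) →
      ∑ k ∈ range m, d k * e k ≤ d (m-1) * ∑ k ∈ range m, e k := by
  intro m
  induction m with
  | zero => simp
  | succ m ih =>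
    intro h
    have h1 := ih (fun k hk => h k (by omega))
    have hd' : d (m-1) ≤ d m := by
      rcases m with _ | m
      · exact le_refl _
      · simpa using hd m
    have hs : 0 ≤ ∑ i ∈ range m, e i := by
      rcases m with _ | m
      · simp
      · exact h m (by omega)
    rw [Finset.sum_range_succ, Finset.sum_range_succ]
    have h2 : d (m-1) * ∑ i ∈ range m, e i ≤ d m * ∑ i ∈ range m, e i :=
      mul_le_mul_of_nonneg_right hd' hs
    have : ∑ k ∈ range m, d k * e k + d m * e m ≤ d m * ∑ i ∈ range m, e i + d m * e m := by
      linarith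
    simpa [mul_add] using this

lemma aux_Iic_sum (n k : ℕ) (hk : k < n) (g : Fin n → ℝ) :
    ∑ j ∈ Finset.Iic (⟨k, hk⟩ : Fin n), g j
      = ∑ i ∈ range (k+1), if h : i < n then g ⟨i, h⟩ else 0 := by
  refine Finset.sum_nbij' (fun j => (j : ℕ)) (fun i => if h : i < n then (⟨i, h⟩ : Fin n) else ⟨k, hk⟩) ?_ ?_ ?_ ?_ ?_
  · intro a ha; simp_all [Fin.le_def]
  · intro a ha; simp at ha
    have h : a < n := by omega
    simp [h, Fin.le_def]; omega
  · intro a ha; simp [a.isLt]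
  · intro a ha; simp at ha; have h : a < n := by omega
    simp only [h, dif_pos]
  · intro a ha; simp [a.isLt]

/-- sum of σ-values over a subset is at least 0+1+...+(card-1). -/
lemma aux_perm_sum_lb {n : ℕ} (σ : Equiv.Perm (Fin n)) (I : Finset (Fin n)) :
    ∑ i ∈ range I.card, i ≤ ∑ i ∈ I, (σ i : ℕ) := by
  have hinj : Set.InjOn (fun i => ((σ i : Fin n) : ℕ)) I :=
    fun a _ b _ h => σ.injective (Fin.val_injective h)
  have himg : ∑ x ∈ I.image (fun i => ((σ i : Fin n) : ℕ)), x = ∑ i ∈ I, ((σ i : Fin n) : ℕ) :=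
    Finset.sum_image (fun a ha b hb h => hinj ha hb h)
  have hcard : (I.image (fun i => ((σ i : Fin n) : ℕ))).card = I.card :=
    Finset.card_image_of_injOn hinj
  rw [← himg, ← hcard]
  exact aux_sum_range_card_le_sum _

lemma aux_gauss_real (m : ℕ) : ∑ i ∈ range m, (i : ℝ) = ((m * (m - 1) : ℕ) : ℝ) / 2 := by
  have := Finset.sum_range_id_mul_two m
  have h2 : ((∑ i ∈ range m, i : ℕ) : ℝ) * 2 = ((m * (m-1) : ℕ) : ℝ) := by exact_mod_cast this
  push_cast at h2 ⊢
  linarith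

/-- The permutohedron
`P_n = { x ∈ ℝ^n : ∑ x_i = n(n-1)/2, ∑_{i∈I} x_i ≥ |I|(|I|-1)/2 for all I }`
is the convex hull of the points `(σ(0), …, σ(n-1))`, `σ` a permutation of `{0,…,n-1}`. -/
theorem permutohedron_eq_convexHull_of_permutation_points (n : ℕ) (hn : 1 ≤ n) :
    {x : Fin n → ℝ |
        (∑ i, x i) = ((n * (n - 1) : ℕ) : ℝ) / 2 ∧
        ∀ I : Finset (Fin n),
          ((I.card * (I.card - 1) : ℕ) : ℝ) / 2 ≤ ∑ i ∈ I, x i} =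
      convexHull ℝ
        {x : Fin n → ℝ | ∃ σ : Equiv.Perm (Fin n), ∀ i, x i = ((σ i : ℕ) : ℝ)} := by
  classical
  set V : Set (Fin n → ℝ) := {x | ∃ σ : Equiv.Perm (Fin n), ∀ i, x i = ((σ i : ℕ) : ℝ)} with hVdef
  set P : Set (Fin n → ℝ) := {x : Fin n → ℝ |
        (∑ i, x i) = ((n * (n - 1) : ℕ) : ℝ) / 2 ∧
        ∀ I : Finset (Fin n),
          ((I.card * (I.card - 1) : ℕ) : ℝ) / 2 ≤ ∑ i ∈ I, x i} with hPdef
  have hPconv : Convex ℝ P := by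
    intro x hx y hy a b ha hb hab
    refine ⟨?_, fun I => ?_⟩
    · simp only [Pi.add_apply, Pi.smul_apply, smul_eq_mul]
      rw [Finset.sum_add_distrib, ← Finset.mul_sum, ← Finset.mul_sum, hx.1, hy.1,
        ← add_mul, hab, one_mul]
    · simp only [Pi.add_apply, Pi.smul_apply, smul_eq_mul]
      rw [Finset.sum_add_distrib, ← Finset.mul_sum, ← Finset.mul_sum]
      have h1 := hx.2 I
      have h2 := hy.2 I
      calc ((I.card * (I.card - 1) : ℕ) : ℝ) / 2
          = a * (((I.card * (I.card - 1) : ℕ) : ℝ) / 2) + b * (((I.card * (I.card - 1) : ℕ) : ℝ) / 2) := by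
            rw [← add_mul, hab, one_mul]
        _ ≤ a * ∑ i ∈ I, x i + b * ∑ i ∈ I, y i :=
            add_le_add (mul_le_mul_of_nonneg_left h1 ha) (mul_le_mul_of_nonneg_left h2 hb)
  have hVP : V ⊆ P := by
    rintro x ⟨σ, hσ⟩
    have hx : x = fun i => ((σ i : ℕ) : ℝ) := funext hσ
    subst hx
    constructor
    · have : ∑ i : Fin n, ((σ i : ℕ) : ℝ) = ∑ i : Fin n, ((i : ℕ) : ℝ) :=
        Equiv.sum_comp σ (fun i => ((i : ℕ) : ℝ))
      rw [this, Fin.sum_univ_eq_sum_range (fun i => (i : ℝ)) n]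
      exact aux_gauss_real n
    · intro I
      have h := aux_perm_sum_lb σ I
      rw [← aux_gauss_real I.card]
      have h' : ((∑ i ∈ range I.card, i : ℕ) : ℝ) ≤ ((∑ i ∈ I, (σ i : ℕ) : ℕ) : ℝ) := Nat.cast_le.mpr h
      push_cast at h'
      exact h' 
  refine Set.Subset.antisymm ?_ (convexHull_min hVP hPconv)
  intro x hx
  by_contra hK
  have hVfin : V.Finite := by
    have hsub : V ⊆ Set.range (fun σ : Equiv.Perm (Fin n) => fun i => ((σ i : ℕ) : ℝ)) := by
      rintro y ⟨σ, hσ⟩; exact ⟨σ, (funext hσ).symm⟩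
    exact (Set.finite_range _).subset hsub
  obtain ⟨f, u, hfu, hux⟩ := geometric_hahn_banach_closed_point
    (convex_convexHull ℝ V) (hVfin.isClosed_convexHull (𝕜 := ℝ)) hK
  set c : Fin n → ℝ := fun i => f (fun j => if i = j then (1:ℝ) else 0) with hcdef
  have hf : ∀ y : Fin n → ℝ, f y = ∑ i, y i * c i := by
    intro y
    conv_lhs => rw [pi_eq_sum_univ y]
    rw [map_sum]
    refine Finset.sum_congr rfl fun i _ => ?_
    rw [map_smul]; simp [smul_eq_mul]; left; rfl
  set τ := Tuple.sort c with hτ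
  have hmono : Monotone (c ∘ τ) := Tuple.monotone_sort c
  set p : Fin n → ℝ := fun i => ((τ.symm i : ℕ) : ℝ) with hpdef
  have hpV : p ∈ V := ⟨τ.symm, fun i => rfl⟩
  have hpu : f p < u := hfu p (subset_convexHull ℝ V hpV)
  set d : ℕ → ℝ := fun k => c (τ ⟨min k (n-1), by omega⟩) with hddef
  set e : ℕ → ℝ := fun k => if h : k < n then x (τ ⟨k, h⟩) - k else 0 with hedef
  have hd : ∀ j, d j ≤ d (j+1) := by
    intro j
    exact hmono (by simp only [Fin.mk_le_mk]; omega)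
  have hpartial : ∀ k, (hk : k < n) → ∑ i ∈ range (k+1), e i
      = ∑ j ∈ Finset.Iic (⟨k, hk⟩ : Fin n), x (τ j) - ∑ i ∈ range (k+1), (i:ℝ) := by
    intro k hk
    rw [aux_Iic_sum n k hk (fun j => x (τ j)), ← Finset.sum_sub_distrib]
    refine Finset.sum_congr rfl fun i hi => ?_
    have hi' : i < n := by simp at hi; omega
    simp [hedef, hi']
  have hIcard : ∀ k, (hk : k < n) →
      ((Finset.Iic (⟨k, hk⟩ : Fin n)).image τ).card = k + 1 := by
    intro k hk
    rw [Finset.card_image_of_injective _ τ.injective, Fin.card_Iic]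
  have hIsum : ∀ k, (hk : k < n) →
      ∑ i ∈ (Finset.Iic (⟨k, hk⟩ : Fin n)).image τ, x i
        = ∑ j ∈ Finset.Iic (⟨k, hk⟩ : Fin n), x (τ j) :=
    fun k hk => Finset.sum_image (fun a _ b _ h => τ.injective h)
  have hpre : ∀ k, k < n → 0 ≤ ∑ i ∈ range (k+1), e i := by
    intro k hk
    rw [hpartial k hk, ← hIsum k hk]
    have h1 := hx.2 ((Finset.Iic (⟨k, hk⟩ : Fin n)).image τ)
    rw [hIcard k hk] at h1
    rw [aux_gauss_real (k+1)]
    simp only [Nat.add_sub_cancel] at h1 ⊢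
    linarith
  have htot : ∑ i ∈ range n, e i = 0 := by
    have hk : n - 1 < n := by omega
    have huniv : Finset.Iic (⟨n-1, hk⟩ : Fin n) = Finset.univ := by
      ext j; simp [Fin.le_def]; omega
    have h := hpartial (n-1) hk
    rw [huniv, show (n-1)+1 = n by omega] at h
    rw [h, Equiv.sum_comp τ x, hx.1, aux_gauss_real n]
    ring
  have habel := aux_abel d e hd n hpre
  rw [htot, mul_zero] at habel
  have hfx : f x = ∑ k : Fin n, x (τ k) * c (τ k) := by
    rw [hf x]; exact (Equiv.sum_comp τ (fun i => x i * c i)).symm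
  have hfp : f p = ∑ k : Fin n, ((k:ℕ):ℝ) * c (τ k) := by
    rw [hf p, ← Equiv.sum_comp τ (fun i => p i * c i)]
    refine Finset.sum_congr rfl fun k _ => ?_
    simp [hpdef]
  have hsum : ∑ k ∈ range n, d k * e k = f x - f p := by
    rw [hfx, hfp, ← Finset.sum_sub_distrib, ← Fin.sum_univ_eq_sum_range (fun k => d k * e k) n]
    refine Finset.sum_congr rfl fun k _ => ?_
    have hk : (k:ℕ) < n := k.isLt
    have h1 : d (k:ℕ) = c (τ k) := by
      simp only [hddef]
      congr 2
      exact Fin.ext (by simp; omega)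
    have h2 : e (k:ℕ) = x (τ k) - ((k:ℕ):ℝ) := by
      simp only [hedef, dif_pos hk, Fin.eta]
    rw [h1, h2]; ring
  rw [hsum] at habel
  linarith
end

section
/- A uniform multidegree on a connected nodal curve is R-semistable: if d has total degree g(X,Σ), X/Σ is connected, and |d_I| ≥ g(X_I,Σ_I) for every subcurve X_I/Σ_I, then for every proper nonempty subcurve, |d_I| ≤ g(X_I,Σ_I) + κ(I) - c(X_I,Σ_I). -/
/-- A uniform multidegree on a connected nodal curve is R-semistable:
if `d` has total degree `g(X,Σ)`, `X/Σ` is connected (`c(X,Σ) = 1`), and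
`|d_I| ≥ g(X_I,Σ_I)` for every subcurve, then for every proper nonempty subcurve
`|d_I| ≤ g(X_I,Σ_I) + κ(I) - c(X_I,Σ_I)`.  Formulated abstractly via the data
`(g_I, c_I, κ(I))` satisfying the genus additivity identity with `c(X,Σ) = 1`. -/
theorem uniform_multidegree_is_R_semistable
    (k : ℕ) (g c κ : Finset (Fin k) → ℤ)
    (hadd : ∀ I : Finset (Fin k),
      g Finset.univ = g I + g Iᶜ + κ I + 1 - c I - c Iᶜ)
    (hc : ∀ I : Finset (Fin k), I ≠ ∅ → 1 ≤ c I)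
    (hgc : ∀ I : Finset (Fin k), c I ≤ g I)
    (d : Fin k → ℤ) (hd : (∑ i, d i) = g Finset.univ)
    (huni : ∀ I : Finset (Fin k), g I ≤ ∑ i ∈ I, d i) :
    ∀ I : Finset (Fin k), I ≠ ∅ → I ≠ Finset.univ →
      ∑ i ∈ I, d i ≤ g I + κ I - c I := by
  intro I hI hIu
  have hcompl : Iᶜ ≠ ∅ := by
    simp only [ne_eq, ← Finset.compl_eq_empty_iff] at *
    simpa using hIu
  have h1 := huni Iᶜ
  have h2 := hc Iᶜ hcompl
  have hsplit : ∑ i ∈ I, d i + ∑ i ∈ Iᶜ, d i = ∑ i, d i :=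
    Finset.sum_add_sum_compl I d
  have h3 := hadd I
  linarith
end

section
/- Let L(λ) be a matrix polynomial, a ∈ ℂ, and suppose the function h(z) with values in ℂ^n, defined and holomorphic near z=0 with λ = a + z², satisfies (L(λ(z)) - μ(z)E) h(z) = 0 where μ is holomorphic in z with μ'(0) ≠ 0 allowed. If λ'(0) = 0 (i.e. λ = a + z²), then L(a) satisfies: (L(a) - μ(0)E) h(0) = 0 and (L(a) - μ(0)E) h'(0) = μ'(0) h(0). In particular, if μ'(0) ≠ 0 and h(0) ≠ 0, then h'(0) is a generalized eigenvector of L(a), so L(a) has a Jordan block of size ≥ 2 at the eigenvalue μ(0). -/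
/-- if `(L(a+z²) - μ(z)E) h(z) = 0` near `z = 0`, with `h`, `μ`
differentiable at `0` and `L` (a matrix polynomial) differentiable at `a`, then
`(L(a) - μ(0)E) h(0) = 0` and `(L(a) - μ(0)E) h'(0) = μ'(0) h(0)`.  In particular,
if `μ'(0) ≠ 0` and `h(0) ≠ 0`, then `h(0)` has a generalized eigenvector, so `L(a)`
has a Jordan block of size ≥ 2 at the eigenvalue `μ(0)`. -/
theorem jordan_block_from_ramification
    (n : ℕ) (L : ℂ → Matrix (Fin n) (Fin n) ℂ) (a : ℂ)
    (h : ℂ → (Fin n → ℂ)) (μ : ℂ → ℂ) (h' : Fin n → ℂ) (μ' : ℂ)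
    (hL : ∀ i j, DifferentiableAt ℂ (fun z => L z i j) a)
    (hh : HasDerivAt h h' 0) (hμ : HasDerivAt μ μ' 0)
    (heq : ∀ᶠ z in nhds (0 : ℂ),
      (L (a + z ^ 2) - μ z • (1 : Matrix (Fin n) (Fin n) ℂ)).mulVec (h z) = 0) :
    (L a - μ 0 • 1).mulVec (h 0) = 0 ∧
    (L a - μ 0 • 1).mulVec h' = μ' • h 0 ∧
    (μ' ≠ 0 → h 0 ≠ 0 → ∃ v : Fin n → ℂ,
      (L a - μ 0 • 1).mulVec v = h 0 ∧
      (L a - μ 0 • 1).mulVec ((L a - μ 0 • 1).mulVec v) = 0) := by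
  have h0 : (L a - μ 0 • 1).mulVec (h 0) = 0 := by
    have := heq.self_of_nhds
    simpa using this
  have key : (L a - μ 0 • 1).mulVec h' = μ' • h 0 := by
    funext i
    have hz2 : HasDerivAt (fun z : ℂ => a + z ^ 2) 0 0 := by
      simpa using (hasDerivAt_pow 2 (0:ℂ)).const_add a
    have hLz : ∀ j, HasDerivAt (fun z : ℂ => L (a + z ^ 2) i j) 0 0 := by
      intro j
      have hd : HasDerivAt (fun z => L z i j) (deriv (fun z => L z i j) a) (a + (0:ℂ) ^ 2) := by
        rw [show a + (0:ℂ) ^ 2 = a by ring]; exact (hL i j).hasDerivAt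
      have := hd.comp 0 hz2
      simpa [Function.comp_def] using this
    have hhj : ∀ j, HasDerivAt (fun z => h z j) (h' j) 0 := fun j =>
      (hasDerivAt_pi.1 hh) j
    have hcomp : ∀ j, HasDerivAt
        (fun z => (L (a + z ^ 2) i j - μ z * (1 : Matrix (Fin n) (Fin n) ℂ) i j) * h z j)
        ((0 - μ' * (1 : Matrix (Fin n) (Fin n) ℂ) i j) * h 0 j
          + (L (a + 0 ^ 2) i j - μ 0 * (1 : Matrix (Fin n) (Fin n) ℂ) i j) * h' j) 0 := by
      intro j
      exact ((hLz j).sub ((hμ.mul_const _))).mul (hhj j)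
    have hsum : HasDerivAt
        (fun z => ∑ j, (L (a + z ^ 2) i j - μ z * (1 : Matrix (Fin n) (Fin n) ℂ) i j) * h z j)
        (∑ j, ((0 - μ' * (1 : Matrix (Fin n) (Fin n) ℂ) i j) * h 0 j
          + (L (a + 0 ^ 2) i j - μ 0 * (1 : Matrix (Fin n) (Fin n) ℂ) i j) * h' j)) 0 :=
      HasDerivAt.fun_sum (fun j _ => hcomp j)
    have heq' : (fun z => ∑ j, (L (a + z ^ 2) i j
        - μ z * (1 : Matrix (Fin n) (Fin n) ℂ) i j) * h z j) =ᶠ[nhds (0:ℂ)] fun _ => 0 := by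
      filter_upwards [heq] with z hz
      have := congrFun hz i
      simpa [Matrix.mulVec, dotProduct, Matrix.sub_apply, Matrix.smul_apply,
        smul_eq_mul] using this
    have hzero : (∑ j, ((0 - μ' * (1 : Matrix (Fin n) (Fin n) ℂ) i j) * h 0 j
        + (L (a + 0 ^ 2) i j - μ 0 * (1 : Matrix (Fin n) (Fin n) ℂ) i j) * h' j)) = 0 := by
      have h1 : HasDerivAt (fun _ : ℂ => (0:ℂ))
          (∑ j, ((0 - μ' * (1 : Matrix (Fin n) (Fin n) ℂ) i j) * h 0 j
          + (L (a + 0 ^ 2) i j - μ 0 * (1 : Matrix (Fin n) (Fin n) ℂ) i j) * h' j)) 0 :=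
        hsum.congr_of_eventuallyEq heq'.symm
      exact h1.unique (hasDerivAt_const 0 0)
    have expand : (∑ j, ((0 - μ' * (1 : Matrix (Fin n) (Fin n) ℂ) i j) * h 0 j
        + (L (a + 0 ^ 2) i j - μ 0 * (1 : Matrix (Fin n) (Fin n) ℂ) i j) * h' j))
        = -(μ' * h 0 i) + ∑ j, (L a i j - μ 0 * (1 : Matrix (Fin n) (Fin n) ℂ) i j) * h' j := by
      rw [Finset.sum_add_distrib]
      congr 1
      · rw [Finset.sum_eq_single i]
        · simp [Matrix.one_apply]
        · intro b _ hb
          simp [Matrix.one_apply, (Ne.symm hb : ¬ i = b)]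
        · simp
      · norm_num
    rw [expand] at hzero
    have : ∑ j, (L a i j - μ 0 * (1 : Matrix (Fin n) (Fin n) ℂ) i j) * h' j = μ' * h 0 i := by
      linear_combination hzero
    simpa [Matrix.mulVec, dotProduct, Matrix.sub_apply, Matrix.smul_apply,
      smul_eq_mul, Pi.smul_apply] using this
  refine ⟨h0, key, fun hμ' hh0 => ⟨μ'⁻¹ • h', ?_, ?_⟩⟩
  · rw [Matrix.mulVec_smul, key, smul_smul, inv_mul_cancel₀ hμ', one_smul]
  · rw [Matrix.mulVec_smul, key]
    simp [Matrix.mulVec_smul, h0]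
end

section
/- Suppose (L(λ) - μ⁺(λ)E) h⁺(λ) = 0 and (L(λ) - μ⁻(λ)E) h⁻(λ) = 0 hold for λ near a, with μ⁺(a) = μ⁻(a) = μ₀, h⁺(a) = h⁻(a) = h₀ ≠ 0, and (μ⁺)'(a) ≠ (μ⁻)'(a). Then (L(a) - μ₀ E)((h⁺)'(a) - (h⁻)'(a)) = ((μ⁺)'(a) - (μ⁻)'(a)) h₀; in particular L(a) has a nontrivial Jordan block at eigenvalue μ₀ (the geometric eigenvector h₀ has a generalized eigenvector). -/
/-- if `(L(λ) - μ⁺(λ)E)h⁺(λ) = 0` and `(L(λ) - μ⁻(λ)E)h⁻(λ) = 0` near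
`a`, with `μ⁺(a) = μ⁻(a) = μ₀`, `h⁺(a) = h⁻(a) = h₀ ≠ 0` and `(μ⁺)'(a) ≠ (μ⁻)'(a)`,
then `(L(a) - μ₀E)((h⁺)'(a) - (h⁻)'(a)) = ((μ⁺)'(a) - (μ⁻)'(a)) h₀`; in particular,
setting `c = (μ⁺)'(a) - (μ⁻)'(a)` and `v = (h⁺)'(a) - (h⁻)'(a)`, the vector `v/c` is
a generalized eigenvector over the eigenvector `h₀`, so `L(a)` has a nontrivial
Jordan block at `μ₀`. -/
theorem jordan_block_from_node
    (n : ℕ) (L : ℂ → Matrix (Fin n) (Fin n) ℂ) (a μ₀ : ℂ)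
    (hp hm : ℂ → (Fin n → ℂ)) (μp μm : ℂ → ℂ)
    (h₀ dhp dhm : Fin n → ℂ) (dμp dμm : ℂ)
    (hL : ∀ i j, DifferentiableAt ℂ (fun z => L z i j) a)
    (hhp : HasDerivAt hp dhp a) (hhm : HasDerivAt hm dhm a)
    (hμp : HasDerivAt μp dμp a) (hμm : HasDerivAt μm dμm a)
    (heqp : ∀ᶠ z in nhds a,
      (L z - μp z • (1 : Matrix (Fin n) (Fin n) ℂ)).mulVec (hp z) = 0)
    (heqm : ∀ᶠ z in nhds a,
      (L z - μm z • (1 : Matrix (Fin n) (Fin n) ℂ)).mulVec (hm z) = 0)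
    (h1 : μp a = μ₀) (h2 : μm a = μ₀)
    (h3 : hp a = h₀) (h4 : hm a = h₀) (h5 : h₀ ≠ 0)
    (hne : dμp ≠ dμm) :
    (L a - μ₀ • 1).mulVec (dhp - dhm) = (dμp - dμm) • h₀ ∧
    (L a - μ₀ • 1).mulVec ((dμp - dμm)⁻¹ • (dhp - dhm)) = h₀ ∧
    (L a - μ₀ • 1).mulVec
        ((L a - μ₀ • 1).mulVec ((dμp - dμm)⁻¹ • (dhp - dhm))) = 0 := by
  have hc : dμp - dμm ≠ 0 := sub_ne_zero.mpr hne
  have hhpc : ∀ j, HasDerivAt (fun z => hp z j) (dhp j) a := fun j =>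
    (hasDerivAt_pi.mp hhp) j
  have hhmc : ∀ j, HasDerivAt (fun z => hm z j) (dhm j) a := fun j =>
    (hasDerivAt_pi.mp hhm) j
  -- componentwise derivative identities
  have key : ∀ (h : ℂ → Fin n → ℂ) (μ : ℂ → ℂ) (dh : Fin n → ℂ) (dμ : ℂ)
      (hh : ∀ j, HasDerivAt (fun z => h z j) (dh j) a)
      (hμ' : HasDerivAt μ dμ a)
      (heq : ∀ᶠ z in nhds a,
        (L z - μ z • (1 : Matrix (Fin n) (Fin n) ℂ)).mulVec (h z) = 0)
      (i : Fin n),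
      (∑ j, (deriv (fun z => L z i j) a * h a j + L a i j * dh j))
        - (dμ * h a i + μ a * dh i) = 0 := by
    intro h μ dh dμ hh hμ' heq i
    have hD : HasDerivAt (fun z => (∑ j, L z i j * h z j) - μ z * h z i)
        ((∑ j, (deriv (fun z => L z i j) a * h a j + L a i j * dh j))
          - (dμ * h a i + μ a * dh i)) a := by
      exact (HasDerivAt.fun_sum (fun j _ =>
        ((hL i j).hasDerivAt.mul (hh j)))).sub (hμ'.mul (hh i))
    have hzero : (fun z => (∑ j, L z i j * h z j) - μ z * h z i) =ᶠ[nhds a]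
        (fun _ => (0 : ℂ)) := by
      filter_upwards [heq] with z hz
      have := congrFun hz i
      simp only [Matrix.mulVec, dotProduct, Matrix.sub_apply,
        Matrix.smul_apply, Matrix.one_apply, smul_eq_mul, sub_mul, mul_ite,
        mul_one, mul_zero, ite_mul, zero_mul, Finset.sum_sub_distrib,
        Finset.sum_ite_eq, Finset.mem_univ, if_true, Pi.zero_apply] at this ⊢
      linear_combination this
    have h0 : HasDerivAt (fun z => (∑ j, L z i j * h z j) - μ z * h z i) 0 a :=
      (hasDerivAt_const a (0 : ℂ)).congr_of_eventuallyEq hzero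
    exact (h0.unique hD).symm
  have Ep := key hp μp dhp dμp hhpc hμp heqp
  have Em := key hm μm dhm dμm hhmc hμm heqm
  have main : (L a - μ₀ • 1).mulVec (dhp - dhm) = (dμp - dμm) • h₀ := by
    funext i
    have e1 := Ep i
    have e2 := Em i
    rw [h3] at e1; rw [h4] at e2; rw [h1] at e1; rw [h2] at e2
    simp only [Matrix.mulVec, dotProduct, Matrix.sub_apply,
      Matrix.smul_apply, Matrix.one_apply, Pi.sub_apply, Pi.smul_apply,
      smul_eq_mul, sub_mul, mul_sub, mul_ite, mul_one, mul_zero, ite_mul,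
      zero_mul, Finset.sum_sub_distrib, Finset.sum_add_distrib,
      Finset.sum_ite_eq, Finset.mem_univ, if_true] at e1 e2 ⊢
    linear_combination e1 - e2
  refine ⟨main, ?_, ?_⟩
  · have : (L a - μ₀ • 1).mulVec ((dμp - dμm)⁻¹ • (dhp - dhm))
        = (dμp - dμm)⁻¹ • ((L a - μ₀ • 1).mulVec (dhp - dhm)) := by
      rw [Matrix.mulVec_smul]
    rw [this, main, smul_smul, inv_mul_cancel₀ hc, one_smul]
  · have h₀eq : (L a - μ₀ • 1).mulVec h₀ = 0 := by
      have := heqp.self_of_nhds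
      rw [h1, h3] at this
      exact this
    have : (L a - μ₀ • 1).mulVec ((dμp - dμm)⁻¹ • (dhp - dhm))
        = (dμp - dμm)⁻¹ • ((L a - μ₀ • 1).mulVec (dhp - dhm)) := by
      rw [Matrix.mulVec_smul]
    rw [this, main, smul_smul, inv_mul_cancel₀ hc, one_smul, h₀eq]
end

section
/- For the solutions of the flow dL/dt = [L², J] on upper-triangular 3×3 matrices with fixed diagonal (α₁,α₂,α₃) and J = diag(j₁,j₂,j₃): the functions L₁₂(t) = c₁₂ e^{σ₁₂ t}, L₂₃(t) = c₂₃ e^{σ₂₃ t}, L₁₃(t) = c₁₃ e^{σ₁₃ t} + c₁₂ c₂₃ (j₁ - j₃) σ⁻¹ e^{(σ₁₂+σ₂₃)t}, with σ₁₂ = (j₂-j₁)(α₁+α₂), σ₂₃ = (j₃-j₂)(α₂+α₃), σ₁₃ = (j₃-j₁)(α₁+α₃), σ = α₁(j₃-j₂) + α₂(j₁-j₃) + α₃(j₂-j₁) ≠ 0, satisfy the matrix differential equation dL/dt = [L², J] where L(t) is upper-triangular with diagonal (α₁,α₂,α₃) and strictly-upper entries L₁₂, L₁₃, L₂₃. 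-/
set_option maxHeartbeats 1000000


attribute [local instance] Matrix.normedAddCommGroup Matrix.normedSpace

/-- the explicit upper-triangular functions
`L₁₂(t) = c₁₂ e^{σ₁₂ t}`, `L₂₃(t) = c₂₃ e^{σ₂₃ t}`,
`L₁₃(t) = c₁₃ e^{σ₁₃ t} + c₁₂ c₂₃ (j₁ - j₃) σ⁻¹ e^{(σ₁₂+σ₂₃)t}`,
with the stated frequencies `σ₁₂, σ₂₃, σ₁₃, σ ≠ 0`, solve the Lax equation
`dL/dt = [L², J]` for `J = diag(j₁,j₂,j₃)` and `L(t)` upper-triangular with fixed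
diagonal `(α₁,α₂,α₃)`. -/
theorem upper_triangular_solution_of_lax_flow
    (j₁ j₂ j₃ α₁ α₂ α₃ c₁₂ c₂₃ c₁₃ σ₁₂ σ₂₃ σ₁₃ σ : ℂ)
    (hσ₁₂ : σ₁₂ = (j₂ - j₁) * (α₁ + α₂))
    (hσ₂₃ : σ₂₃ = (j₃ - j₂) * (α₂ + α₃))
    (hσ₁₃ : σ₁₃ = (j₃ - j₁) * (α₁ + α₃))
    (hσ : σ = α₁ * (j₃ - j₂) + α₂ * (j₁ - j₃) + α₃ * (j₂ - j₁))
    (hσne : σ ≠ 0)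
    (L : ℂ → Matrix (Fin 3) (Fin 3) ℂ)
    (hL : ∀ t : ℂ, L t =
      !![α₁, c₁₂ * Complex.exp (σ₁₂ * t),
          c₁₃ * Complex.exp (σ₁₃ * t) +
            c₁₂ * c₂₃ * (j₁ - j₃) * σ⁻¹ * Complex.exp ((σ₁₂ + σ₂₃) * t);
         0, α₂, c₂₃ * Complex.exp (σ₂₃ * t);
         0, 0, α₃]) :
    ∀ t : ℂ, HasDerivAt L
      (L t * L t * Matrix.diagonal ![j₁, j₂, j₃] -
        Matrix.diagonal ![j₁, j₂, j₃] * (L t * L t)) t := by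
  have hdiag : Matrix.diagonal ![j₁, j₂, j₃] = !![j₁,0,0;0,j₂,0;0,0,j₃] := by
    ext i j
    fin_cases i <;> fin_cases j <;> simp [Matrix.diagonal, Matrix.vecHead, Matrix.vecTail]
  intro t
  have hexp : ∀ a : ℂ, HasDerivAt (fun t : ℂ => Complex.exp (a * t))
      (a * Complex.exp (a * t)) t := by
    intro a
    have h := ((hasDerivAt_id t).const_mul a).cexp
    simpa [mul_comm] using h
  have hLfun : L = fun t => !![α₁, c₁₂ * Complex.exp (σ₁₂ * t),
          c₁₃ * Complex.exp (σ₁₃ * t) +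
            c₁₂ * c₂₃ * (j₁ - j₃) * σ⁻¹ * Complex.exp ((σ₁₂ + σ₂₃) * t);
         0, α₂, c₂₃ * Complex.exp (σ₂₃ * t);
         0, 0, α₃] := funext hL
  have hderiv : HasDerivAt L
      (!![0, σ₁₂ * (c₁₂ * Complex.exp (σ₁₂ * t)),
        σ₁₃ * (c₁₃ * Complex.exp (σ₁₃ * t)) +
          (σ₁₂ + σ₂₃) * (c₁₂ * c₂₃ * (j₁ - j₃) * σ⁻¹ * Complex.exp ((σ₁₂ + σ₂₃) * t));
       0, 0, σ₂₃ * (c₂₃ * Complex.exp (σ₂₃ * t));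
       0, 0, 0]) t := by
    rw [hLfun]
    refine hasDerivAt_pi.2 fun i => hasDerivAt_pi.2 fun j => ?_
    fin_cases i <;> fin_cases j
    · simpa using hasDerivAt_const t α₁
    · simpa [mul_comm, mul_assoc, mul_left_comm] using (hexp σ₁₂).const_mul c₁₂
    · simpa [mul_comm, mul_assoc, mul_left_comm] using
        ((hexp σ₁₃).const_mul c₁₃).fun_add
          ((hexp (σ₁₂ + σ₂₃)).const_mul (c₁₂ * c₂₃ * (j₁ - j₃) * σ⁻¹))
    · simpa using hasDerivAt_const t (0:ℂ)
    · simpa using hasDerivAt_const t α₂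
    · simpa [mul_comm, mul_assoc, mul_left_comm] using (hexp σ₂₃).const_mul c₂₃
    · simpa using hasDerivAt_const t (0:ℂ)
    · simpa using hasDerivAt_const t (0:ℂ)
    · simpa using hasDerivAt_const t α₃
  convert hderiv using 1
  rw [hL t, hdiag]
  ext i j
  fin_cases i <;> fin_cases j <;>
    simp [Matrix.mul_apply, Fin.sum_univ_three, Matrix.vecHead, Matrix.vecTail]
  all_goals first
    | ring1
    | (rw [hσ₁₂]; ring1)
    | (rw [hσ₂₃]; ring1)
    | ((try simp only [add_mul, Complex.exp_add])
       generalize Complex.exp (σ₁₃ * t) = e₁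
       (try generalize Complex.exp (t * σ₁₂) = e₂)
       (try generalize Complex.exp (t * σ₂₃) = e₃)
       (try generalize Complex.exp (σ₁₂ * t) = e₄)
       (try generalize Complex.exp (σ₂₃ * t) = e₅)
       rw [hσ₁₂, hσ₂₃, hσ₁₃]
       field_simp
       rw [hσ]
       ring1)
end
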